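/- arXiv:1510.00644 — 2 statements merged into one kernel-verified Lean document; each statement's English description precedes it below -/
import Mathlib

section
/- Let I be a two-sided ideal of the free algebra U on an alphabet A of 2N letters with a fixed shuffle order. Let e_k(u) be the sum of u_{z1}···u_{zk} over sequences with z1 ≥' ... ≥' zk (strict decrease except equal barred letters allowed), and h_k(u) the sum over sequences z1 ≤'' ... ≤'' zk (weak increase, with equality only allowed for unbarred letters). Then e_k(u)e_l(u) = e_l(u)e_k(u) in U/I for all k,l if and only if h_k(u)h_l(u) = h_l(u)h_k(u) in U/I for all k,l. -/
open scoped BigOperators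
open Classical

noncomputable section

namespace NCS

/-- A colored letter: an element of `Fin N` together with a `Bool` which is
`true` for barred letters and `false` for unbarred letters. -/
abbrev Letter (N : ℕ) := Fin N × Bool

variable {N : ℕ}

/-- The key of the natural order `1 < 1̄ < 2 < 2̄ < ⋯ < N < N̄`. -/
def natKey (x : Letter N) : ℕ := 2 * x.1.val + (if x.2 then 1 else 0)

/-- The key of the big bar order `1 ≺ ⋯ ≺ N ≺ 1̄ ≺ ⋯ ≺ N̄`. -/
def barKey (N : ℕ) (x : Letter N) : ℕ := if x.2 then N + x.1.val else x.1.val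

/-- A shuffle order on the alphabet, encoded by an injective key function which is
increasing on unbarred letters and on barred letters. -/
def IsShuffleKey (key : Letter N → ℕ) : Prop :=
  Function.Injective key ∧
  (∀ a b : Fin N, a < b → key (a, false) < key (b, false)) ∧
  (∀ a b : Fin N, a < b → key (a, true) < key (b, true))

/-- The free associative `ℤ`-algebra on the alphabet. -/
abbrev FA (N : ℕ) := MonoidAlgebra ℤ (FreeMonoid (Letter N))

/-- The monomial of a colored word. -/
def wrd (w : List (Letter N)) : FA N := MonoidAlgebra.single (FreeMonoid.ofList w) 1

/-- `y ≥' x` : `y > x`, or `y` and `x` are equal barred letters. -/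
def colGE (key : Letter N → ℕ) (y x : Letter N) : Prop :=
  key x < key y ∨ (y = x ∧ y.2 = true)

/-- `y ≤'' z` : `y < z`, or `y` and `z` are equal unbarred letters. -/
def rowLE (key : Letter N → ℕ) (y z : Letter N) : Prop :=
  key y < key z ∨ (y = z ∧ y.2 = false)

/-- `x ≤col y` : `x < y`, or `x` and `y` are equal barred letters. -/
def colLE (key : Letter N → ℕ) (x y : Letter N) : Prop :=
  key x < key y ∨ (x = y ∧ x.2 = true)

/-- The noncommutative super elementary symmetric function `e_k(S)` with letters
restricted to the set `S`. -/
def eSet (key : Letter N → ℕ) (S : Set (Letter N)) (k : ℕ) : FA N :=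
  ∑ f ∈ (Finset.univ : Finset (Fin k → Letter N)).filter
      (fun f => (∀ i, f i ∈ S) ∧ ∀ i j : Fin k, (j : ℕ) = (i : ℕ) + 1 → colGE key (f i) (f j)),
    wrd (List.ofFn f)

/-- The noncommutative super elementary symmetric function `e_k(u)`. -/
def eU (key : Letter N → ℕ) (k : ℕ) : FA N := eSet key Set.univ k

/-- `e_k(u)` with integer index; `0` for negative `k`. -/
def eZ (key : Letter N → ℕ) (k : ℤ) : FA N := if 0 ≤ k then eU key k.toNat else 0

/-- `e_k(S)` with integer index; `0` for negative `k`. -/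
def eSetZ (key : Letter N → ℕ) (S : Set (Letter N)) (k : ℤ) : FA N :=
  if 0 ≤ k then eSet key S k.toNat else 0

/-- The noncommutative super homogeneous symmetric function `h_k(u)`. -/
def hU (key : Letter N → ℕ) (k : ℕ) : FA N :=
  ∑ f ∈ (Finset.univ : Finset (Fin k → Letter N)).filter
      (fun f => ∀ i j : Fin k, (j : ℕ) = (i : ℕ) + 1 → rowLE key (f i) (f j)),
    wrd (List.ofFn f)

/-- The relations generating the two-sided ideal `I_Kron` (with respect to the
natural order; recall `natKey x + 1 = natKey y` says `x = y↓`). -/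
inductive kronRel (N : ℕ) : FA N → FA N → Prop
  | rel3 (x y : Letter N) (hy : y.2 = false) (h : natKey x < natKey y) :
      kronRel N (wrd [y, y, x]) (wrd [y, x, y])
  | rel3b (y z : Letter N) (hy : y.2 = false) (h : natKey y < natKey z) :
      kronRel N (wrd [z, y, y]) (wrd [y, z, y])
  | rel4 (y z : Letter N) (hy : y.2 = true) (h : natKey y < natKey z) :
      kronRel N (wrd [y, y, z]) (wrd [y, z, y])
  | rel4b (x y : Letter N) (hy : y.2 = true) (h : natKey x < natKey y) :
      kronRel N (wrd [x, y, y]) (wrd [y, x, y])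
  | rot (x y z : Letter N) (h1 : natKey x + 1 = natKey y) (h2 : natKey y + 1 = natKey z) :
      kronRel N (wrd [x, z, y] - wrd [z, x, y]) (wrd [y, x, z] - wrd [y, z, x])
  | far (x z : Letter N) (h : natKey x + 2 < natKey z) :
      kronRel N (wrd [x, z]) (wrd [z, x])

/-- The relations generating the ⋖-colored plactic ideal `I_plac^⋖`. -/
inductive placRel (N : ℕ) (key : Letter N → ℕ) : FA N → FA N → Prop
  | k1 (x y z : Letter N) (h1 : key x < key y) (h2 : key y < key z) :
      placRel N key (wrd [x, z, y]) (wrd [z, x, y])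
  | k2 (x y z : Letter N) (h1 : key x < key y) (h2 : key y < key z) :
      placRel N key (wrd [y, x, z]) (wrd [y, z, x])
  | k3 (x y : Letter N) (hy : y.2 = false) (h : key x < key y) :
      placRel N key (wrd [y, y, x]) (wrd [y, x, y])
  | k3b (y z : Letter N) (hy : y.2 = false) (h : key y < key z) :
      placRel N key (wrd [z, y, y]) (wrd [y, z, y])
  | k4 (y z : Letter N) (hy : y.2 = true) (h : key y < key z) :
      placRel N key (wrd [y, y, z]) (wrd [y, z, y])
  | k4b (x y : Letter N) (hy : y.2 = true) (h : key x < key y) :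
      placRel N key (wrd [x, y, y]) (wrd [y, x, y])

/-- The relations generating the ideal `I_kronknuth`. -/
inductive kkRel (N : ℕ) : FA N → FA N → Prop
  | rel3 (x y : Letter N) (hy : y.2 = false) (h : natKey x < natKey y) :
      kkRel N (wrd [y, y, x]) (wrd [y, x, y])
  | rel3b (y z : Letter N) (hy : y.2 = false) (h : natKey y < natKey z) :
      kkRel N (wrd [z, y, y]) (wrd [y, z, y])
  | rel4 (y z : Letter N) (hy : y.2 = true) (h : natKey y < natKey z) :
      kkRel N (wrd [y, y, z]) (wrd [y, z, y])
  | rel4b (x y : Letter N) (hy : y.2 = true) (h : natKey x < natKey y) :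
      kkRel N (wrd [x, y, y]) (wrd [y, x, y])
  | rot (x y z : Letter N) (h1 : natKey x + 1 = natKey y) (h2 : natKey y + 1 = natKey z) :
      kkRel N (wrd [x, z, y] - wrd [z, x, y]) (wrd [y, x, z] - wrd [y, z, x])
  | kk1 (x y z : Letter N) (h1 : natKey x < natKey y) (h2 : natKey y < natKey z)
      (h3 : natKey x + 2 < natKey z) :
      kkRel N (wrd [x, z, y]) (wrd [z, x, y])
  | kk2 (x y z : Letter N) (h1 : natKey x < natKey y) (h2 : natKey y < natKey z)
      (h3 : natKey x + 2 < natKey z) :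
      kkRel N (wrd [y, x, z]) (wrd [y, z, x])

end NCS
namespace NCS

variable {N : ℕ}

/-- The ordinary word `w^r`: barred letters shuffled to the right, that subword
reversed and de-barred.  Letters are recorded `1`-indexed. -/
def plainr (w : List (Letter N)) : List ℕ :=
  (w.filter (fun x => !x.2)).map (fun x => x.1.val + 1) ++
    ((w.filter (fun x => x.2)).reverse).map (fun x => x.1.val + 1)

/-- The number of barred letters of a colored word. -/
def barredCount (w : List (Letter N)) : ℕ := (w.filter (fun x => x.2)).length

/-- An ordinary word (in the `1`-indexed alphabet) is Yamanouchi of content `lam`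
(`lam i` = multiplicity of the letter `i+1`). -/
def IsYamOf (lam : ℕ → ℕ) (u : List ℕ) : Prop :=
  (∀ i : ℕ, u.count (i + 1) = lam i) ∧
    ∀ t i : ℕ, (u.drop t).count (i + 2) ≤ (u.drop t).count (i + 1)

/-- An ordinary word is Yamanouchi (of some content). -/
def IsYamWord (u : List ℕ) : Prop :=
  ∀ t i : ℕ, (u.drop t).count (i + 2) ≤ (u.drop t).count (i + 1)

/-- The set of colored Yamanouchi words of content `lam` with exactly `d` barred letters. -/
def CYW (N : ℕ) (lam : ℕ → ℕ) (d : ℕ) : Set (List (Letter N)) :=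
  {w | IsYamOf lam (plainr w) ∧ barredCount w = d}

/-- `CYW` as a finset (all its members have length `n = Σ lam`). -/
def CYWfin (N : ℕ) (lam : ℕ → ℕ) (d n : ℕ) : Finset (List (Letter N)) :=
  ((Finset.univ : Finset (Fin n → Letter N)).image List.ofFn).filter
    (fun w => w ∈ CYW N lam d)

/-- A set of colored words is shuffle closed. -/
def ShuffleClosed (W : Set (List (Letter N))) : Prop :=
  ∀ (u v : List (Letter N)) (x y : Letter N), x.2 ≠ y.2 →
    (u ++ x :: y :: v) ∈ W → (u ++ y :: x :: v) ∈ W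

/-- The ⋖-descent set of a colored word (`0`-indexed positions). -/
def DesSet (key : Letter N → ℕ) (w : List (Letter N)) : Set ℕ :=
  {i | ∃ h : i + 1 < w.length,
    key (w.get ⟨i + 1, h⟩) < key (w.get ⟨i, Nat.lt_of_succ_lt h⟩) ∨
      (w.get ⟨i, Nat.lt_of_succ_lt h⟩ = w.get ⟨i + 1, h⟩ ∧ (w.get ⟨i + 1, h⟩).2 = true)}

/-- Coefficient of the monomial `m` in Gessel's fundamental quasisymmetric
function `Q_S` for words of length `t`. -/
def Qcoeff (t : ℕ) (S : Set ℕ) (m : ℕ →₀ ℕ) : ℤ :=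
  Nat.card {i : Fin t → ℕ //
    (∀ j k : Fin t, j ≤ k → i j ≤ i k) ∧
    (∀ j k : Fin t, (k : ℕ) = (j : ℕ) + 1 → (j : ℕ) ∈ S → i j < i k) ∧
    (∀ v : ℕ, m v = (Finset.univ.filter (fun j : Fin t => i j = v)).card)}

/-- Gessel's fundamental quasisymmetric function as a power series in the
variables `x_0, x_1, …`. -/
def Qqs (t : ℕ) (S : Set ℕ) : MvPowerSeries ℕ ℤ := fun m => Qcoeff t S m

/-- The boxes of the (possibly restricted) shape with column lengths bounded by
`rows` and row lengths given by `nu`. -/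
def shapeFin (nu : ℕ → ℕ) (rows : ℕ) : Finset (ℕ × ℕ) :=
  (Finset.range rows ×ˢ Finset.range (nu 0)).filter (fun p => p.2 < nu p.1)

/-- `E` is a ⋖-colored tableau of shape `nu` (rows weakly increase with equal
letters unbarred; columns weakly increase with equal letters barred). -/
def IsCT (key : Letter N → ℕ) (nu : ℕ → ℕ) (E : ℕ × ℕ → Letter N) : Prop :=
  (∀ r c : ℕ, c + 1 < nu r → rowLE key (E (r, c)) (E (r, c + 1))) ∧
  (∀ r c : ℕ, c < nu (r + 1) → colLE key (E (r, c)) (E (r + 1, c)))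

/-- Pad a partition given on `Fin n` to a function on `ℕ`. -/
def padF {n : ℕ} (f : Fin n → ℕ) : ℕ → ℕ := fun i => if h : i < n then f ⟨i, h⟩ else 0

/-- Extend a filling of the shape to all of `ℕ × ℕ` by a junk letter. -/
def extT (nu : ℕ → ℕ) (rows : ℕ) (junk : Letter N)
    (T : {p : ℕ × ℕ // p ∈ shapeFin nu rows} → Letter N) : ℕ × ℕ → Letter N :=
  fun p => if h : p ∈ shapeFin nu rows then T ⟨p, h⟩ else junk

/-- The reading word `sqread`: diagonals from southwest to northeast; on each
diagonal the unbarred entries are read in the ↖ direction followed by the barred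
entries in the ↘ direction. -/
def sqread (nu : ℕ → ℕ) (rows : ℕ) (E : ℕ × ℕ → Letter N) : List (Letter N) :=
  (List.range (rows + nu 0)).flatMap (fun k =>
    let boxes : List (ℕ × ℕ) := (List.range rows).filterMap (fun (r : ℕ) =>
      let c : ℤ := (r : ℤ) + (k : ℤ) - (rows : ℤ) + 1
      if 0 ≤ c ∧ c.toNat < nu r then some (r, c.toNat) else none)
    ((boxes.filter (fun b => !(E b).2)).reverse ++ boxes.filter (fun b => (E b).2)).map E)

/-- The column reading word: columns read bottom to top, leftmost column first. -/
def colword (nu : ℕ → ℕ) (rows : ℕ) (E : ℕ × ℕ → Letter N) : List (Letter N) :=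
  (List.range (nu 0)).flatMap (fun c =>
    ((List.range rows).filter (fun r => decide (c < nu r))).reverse.map (fun r => E (r, c)))

/-- The Kostka number: semistandard Young tableaux of shape `nu` and content `m`
(entries `1`-indexed; entry `i+1` corresponds to the variable `x_i`). -/
def kostka (nu : ℕ → ℕ) (m : ℕ →₀ ℕ) : ℤ :=
  Nat.card {T : ℕ × ℕ → ℕ //
    (∀ r c : ℕ, c + 1 < nu r → T (r, c) ≤ T (r, c + 1)) ∧
    (∀ r c : ℕ, c < nu (r + 1) → T (r, c) < T (r + 1, c)) ∧
    (∀ r c : ℕ, c < nu r → 1 ≤ T (r, c)) ∧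
    (∀ r c : ℕ, ¬ c < nu r → T (r, c) = 0) ∧
    (∀ i : ℕ, (m i : ℕ) = Nat.card {p : ℕ × ℕ // p.2 < nu p.1 ∧ T p = i + 1})}

/-- The parts of a partition of `n`, as a weakly decreasing list. -/
def partList {n : ℕ} (ν : Nat.Partition n) : List ℕ := (ν.parts.sort (· ≤ ·)).reverse

/-- The parts of a partition of `n`, as a function `ℕ → ℕ` (`0`-indexed). -/
def partFun {n : ℕ} (ν : Nat.Partition n) : ℕ → ℕ := fun i => (partList ν).getD i 0

/-- The conjugate partition: `ν'_j = #{i < rows : ν_i ≥ j}`. -/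
def conjP (nu : ℕ → ℕ) (j : ℕ) (rows : ℕ) : ℕ :=
  ((Finset.range rows).filter (fun i => j ≤ nu i)).card

/-- The noncommutative super Schur function
`𝔍_ν(u) = Σ_{π ∈ S_t} sgn(π) e_{ν'_1+π(1)-1}(u) ⋯ e_{ν'_t+π(t)-t}(u)`, `t = ν_1`. -/
def JncF (key : Letter N → ℕ) (nu : ℕ → ℕ) (rows : ℕ) : FA N :=
  ∑ π : Equiv.Perm (Fin (nu 0)),
    (Equiv.Perm.sign π : ℤ) •
      (List.ofFn (fun i : Fin (nu 0) =>
        eZ key ((conjP nu (i.1 + 1) rows : ℤ) + ((π i).1 : ℤ) - (i.1 : ℤ)))).prod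

end NCS
namespace NCS

variable {N : ℕ}

/-- A partition diagram (as a set of `0`-indexed boxes). -/
def IsPartitionDiagram (P : Finset (ℕ × ℕ)) : Prop :=
  ∀ p ∈ P, ∀ q : ℕ × ℕ, q.1 ≤ p.1 → q.2 ≤ p.2 → q ∈ P

/-- `p ≤ q` in the northeast order: `q.1 ≤ p.1` and `p.2 ≤ q.2`. -/
def neLE (p q : ℕ × ℕ) : Prop := q.1 ≤ p.1 ∧ p.2 ≤ q.2

/-- A restricted shape: a lower order ideal of a partition diagram for the
northeast order. -/
def IsRestrictedShape (D : Finset (ℕ × ℕ)) : Prop :=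
  ∃ P : Finset (ℕ × ℕ), IsPartitionDiagram P ∧ D ⊆ P ∧
    ∀ p ∈ P, ∀ q ∈ D, neLE p q → p ∈ D

/-- A restricted colored tableau (for the natural order). -/
structure RCT (N : ℕ) where
  shape : Finset (ℕ × ℕ)
  restricted : IsRestrictedShape shape
  entry : ℕ × ℕ → Letter N
  row : ∀ r c : ℕ, (r, c) ∈ shape → (r, c + 1) ∈ shape →
    natKey (entry (r, c)) < natKey (entry (r, c + 1)) ∨
      (entry (r, c) = entry (r, c + 1) ∧ (entry (r, c)).2 = false)
  col : ∀ r c : ℕ, (r, c) ∈ shape → (r + 1, c) ∈ shape →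
    natKey (entry (r, c)) < natKey (entry (r + 1, c)) ∨
      (entry (r, c) = entry (r + 1, c) ∧ (entry (r, c)).2 = true)

/-- A ↖ arrow of `R` from the box `tail` (containing `a+1`) to the box `head`
(containing `a`); the two boxes are opposite corners of a rectangle whose
intersection with the shape is an arrow subtableau. -/
def nwArrow (R : RCT N) (tail head : ℕ × ℕ) : Prop :=
  head ∈ R.shape ∧ tail ∈ R.shape ∧ head.1 < tail.1 ∧ head.2 < tail.2 ∧
  (∃ a b : Fin N, R.entry head = (a, false) ∧ R.entry tail = (b, false) ∧
    (b : ℕ) = (a : ℕ) + 1) ∧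
  ((tail.1 = head.1 + 1 ∧ tail.2 = head.2 + 1 ∧ (tail.1, head.2) ∈ R.shape) ∨
   (head.1 + 1 < tail.1 ∧
    (∀ p ∈ R.shape, head.1 ≤ p.1 → p.1 ≤ tail.1 → head.2 ≤ p.2 → p.2 ≤ tail.2 →
      p.2 = head.2 ∨ p.1 = tail.1) ∧
    (∀ r : ℕ, head.1 ≤ r → r ≤ tail.1 → (r, head.2) ∈ R.shape) ∧
    (∀ c : ℕ, head.2 ≤ c → c ≤ tail.2 → (tail.1, c) ∈ R.shape)))

/-- A ↘ arrow of `R` from the box `tail` (containing `ā`) to the box `head`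
(containing `(a+1)`-bar). -/
def seArrow (R : RCT N) (tail head : ℕ × ℕ) : Prop :=
  tail ∈ R.shape ∧ head ∈ R.shape ∧ tail.1 < head.1 ∧ tail.2 < head.2 ∧
  (∃ a b : Fin N, R.entry tail = (a, true) ∧ R.entry head = (b, true) ∧
    (b : ℕ) = (a : ℕ) + 1) ∧
  ((head.1 = tail.1 + 1 ∧ head.2 = tail.2 + 1 ∧ (head.1, tail.2) ∈ R.shape) ∨
   (tail.2 + 1 < head.2 ∧
    (∀ p ∈ R.shape, tail.1 ≤ p.1 → p.1 ≤ head.1 → tail.2 ≤ p.2 → p.2 ≤ head.2 →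
      p.2 = tail.2 ∨ p.1 = head.1) ∧
    (∀ r : ℕ, tail.1 ≤ r → r ≤ head.1 → (r, tail.2) ∈ R.shape) ∧
    (∀ c : ℕ, tail.2 ≤ c → c ≤ head.2 → (head.1, c) ∈ R.shape)))

/-- A box is the tail of an arrow of `R`. -/
def IsArrowTail (R : RCT N) (β : ℕ × ℕ) : Prop :=
  (∃ h, nwArrow R β h) ∨ (∃ h, seArrow R β h)

/-- A box which is maximal in `D` for the northeast order. -/
def NEMaximal (D : Finset (ℕ × ℕ)) (β : ℕ × ℕ) : Prop :=
  β ∈ D ∧ ∀ q ∈ D, neLE β q → q = β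

/-- `L` is an arrow respecting reading order of the RCT `R`: an enumeration of
the boxes compatible with the northeast order, reading every arrow tail before
the corresponding head. -/
def IsARWord (R : RCT N) (L : List (ℕ × ℕ)) : Prop :=
  L.Nodup ∧ (∀ β : ℕ × ℕ, β ∈ L ↔ β ∈ R.shape) ∧
  (∀ β β' : ℕ × ℕ, β ∈ L → β' ∈ L → neLE β β' → β ≠ β' →
    L.idxOf β < L.idxOf β') ∧
  (∀ t h : ℕ × ℕ, nwArrow R t h ∨ seArrow R t h → L.idxOf t < L.idxOf h)

end NCS
namespace NCS

variable {N : ℕ}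

/-! ### Word conversion -/

/-- Rotate a list once to the right. -/
def rotR {α : Type*} (l : List α) : List α := l.rotate (l.length - 1)

/-- Word conversion: fix all letters not satisfying `p` and rotate each maximal
consecutive run of letters satisfying `p` once to the right. -/
def conv {α : Type*} (p : α → Bool) : List α → List α
  | [] => []
  | x :: xs =>
    if p x = true then
      rotR ((x :: xs).takeWhile p) ++ conv p (xs.dropWhile p)
    else x :: conv p xs
termination_by l => l.length
decreasing_by
  · exact Nat.lt_succ_of_le ((List.dropWhile_suffix p).length_le)
  · exact Nat.lt_succ_self _

/-! ### Ordinary RSK insertion -/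

/-- Row bumping: insert `x` into a weakly increasing row, bumping the leftmost
entry strictly greater than `x`. -/
def bumpRow : List ℕ → ℕ → List ℕ × Option ℕ
  | [], x => ([x], none)
  | y :: ys, x =>
    if x < y then (x :: ys, some y)
    else
      let p := bumpRow ys x
      (y :: p.1, p.2)

/-- Schensted insertion of a letter into a tableau (given as its list of rows). -/
def insertEntry : List (List ℕ) → ℕ → List (List ℕ)
  | [], x => [[x]]
  | row :: rest, x =>
    match bumpRow row x with
    | (row', none) => row' :: rest
    | (row', some y) => row' :: insertEntry rest y

/-- The insertion tableau of an ordinary word. -/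
def insertionTableau (w : List ℕ) : List (List ℕ) := w.foldl insertEntry []

/-- A tableau (list of rows) is superstandard: row `i` is filled with `i+1`'s
(`1`-indexed letters). -/
def IsSuperstandard (Q : List (List ℕ)) : Prop :=
  ∀ i : ℕ, ∀ h : i < Q.length, ∀ v ∈ Q.get ⟨i, h⟩, v = i + 1

/-! ### Standardization -/

/-- The ⋖-standardization of a colored word: occurrences of each letter are
relabelled, smallest letter first, left to right for unbarred letters and
right to left for barred letters, by `1, 2, …`. -/
def stdz (key : Letter N → ℕ) (w : List (Letter N)) : List ℕ :=
  (List.finRange w.length).map (fun i =>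
    ((List.finRange w.length).filter
        (fun j => decide (key (w.get j) < key (w.get i)))).length +
    (if (w.get i).2 then
        ((List.finRange w.length).filter
          (fun j => decide (i < j ∧ w.get j = w.get i))).length
      else
        ((List.finRange w.length).filter
          (fun j => decide (j < i ∧ w.get j = w.get i))).length) + 1)

/-- The free `ℤ`-algebra on the ordinary (unbarred) alphabet `ℕ`. -/
abbrev FAO := MonoidAlgebra ℤ (FreeMonoid ℕ)

/-- The monomial of an ordinary word. -/
def wrdO (w : List ℕ) : FAO := MonoidAlgebra.single (FreeMonoid.ofList w) 1

/-- The ordinary Knuth (plactic) relations. -/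
inductive knuthRel : FAO → FAO → Prop
  | k1 (a b c : ℕ) (h1 : a < b) (h2 : b < c) : knuthRel (wrdO [a, c, b]) (wrdO [c, a, b])
  | k2 (a b c : ℕ) (h1 : a < b) (h2 : b < c) : knuthRel (wrdO [b, a, c]) (wrdO [b, c, a])
  | k3 (a b : ℕ) (h : a < b) : knuthRel (wrdO [b, b, a]) (wrdO [b, a, b])
  | k4 (b c : ℕ) (h : b < c) : knuthRel (wrdO [c, b, b]) (wrdO [b, c, b])

/-! ### Pairing, the noncommutative Cauchy product, symmetric series -/

/-- The bilinear pairing on `U` for which the colored words are orthonormal. -/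
def pairU (f g : FA N) : ℤ := ∑ w ∈ f.coeff.support, f.coeff w * g.coeff w

/-- Coefficient of `x^m` in the noncommutative Cauchy product
`Ω(x,u) = Π_j (c_{z_1}(x_j) ⋯ c_{z_{2N}}(x_j))`: the product of the `h_{m_j}(u)`
in increasing order of `j`. -/
def OmegaC (key : Letter N → ℕ) (m : ℕ →₀ ℕ) : FA N :=
  ((m.support.sort (· ≤ ·)).map (fun j => hU key (m j))).prod

/-- Total degree of a monomial. -/
def degM (m : ℕ →₀ ℕ) : ℕ := m.sum fun _ k => k

/-- Coefficient of `x^m` in the monomial symmetric function `m_ν`. -/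
def mCoeff {k : ℕ} (ν : Nat.Partition k) (m : ℕ →₀ ℕ) : ℤ :=
  if Multiset.map (fun j => m j) m.support.val = ν.parts then 1 else 0

/-- `h_ν(u) = h_{ν_1}(u) h_{ν_2}(u) ⋯`. -/
def hProd (key : Letter N → ℕ) (L : List ℕ) : FA N := (L.map (hU key)).prod

/-- Coefficient of `x^m` in `F_γ(x) = Σ_w γ_w Q_{Des(w)}(x)`. -/
def FgammaC (key : Letter N → ℕ) (γ : FA N) (m : ℕ →₀ ℕ) : ℤ :=
  ∑ w ∈ γ.coeff.support, γ.coeff w *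
    Qcoeff (FreeMonoid.toList w).length (DesSet key (FreeMonoid.toList w)) m

/-- A series (given by its coefficients) is symmetric. -/
def SymmSeries (F : (ℕ →₀ ℕ) → ℤ) : Prop :=
  ∀ σ : Equiv.Perm ℕ, ∀ m : ℕ →₀ ℕ, F (Finsupp.mapDomain σ m) = F m

/-! ### Characters of symmetric groups and Kronecker coefficients -/

/-- The power sum polynomial `p_k` in `n` variables. -/
def powS (n k : ℕ) : MvPolynomial (Fin n) ℤ := ∑ j : Fin n, MvPolynomial.X j ^ k

/-- The Vandermonde alternant `a_δ = Σ_σ sgn(σ) Π_i x_{σ(i)}^{n-1-i}`. -/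
def aDelta (n : ℕ) : MvPolynomial (Fin n) ℤ :=
  ∑ σ : Equiv.Perm (Fin n),
    (Equiv.Perm.sign σ : ℤ) • ∏ i : Fin n, MvPolynomial.X (σ i) ^ (n - 1 - (i : ℕ))

/-- The irreducible character `χ^λ` of `S_n` evaluated at `σ`, via the Frobenius
character formula: the coefficient of `x^{λ+δ}` in `a_δ · p_{cycleType σ}`. -/
def chi (n : ℕ) (lam : Fin n → ℕ) (σ : Equiv.Perm (Fin n)) : ℤ :=
  MvPolynomial.coeff
    (Finsupp.equivFunOnFinite.symm (fun i : Fin n => lam i + (n - 1 - (i : ℕ))))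
    (aDelta n * (σ.cycleType.map (fun k => powS n k)).prod)

/-- The hook partition `μ(d) = (n-d, 1^d)`, as a function on `Fin n`. -/
def hookP (n d : ℕ) : Fin n → ℕ :=
  fun i => if (i : ℕ) = 0 then n - d else if (i : ℕ) ≤ d then 1 else 0

/-- `n!` times the Kronecker coefficient `g_{λμν}`, via
`g = (1/n!) Σ_σ χ^λ(σ) χ^μ(σ) χ^ν(σ)`. -/
def kronC (n : ℕ) (lam mu nu : Fin n → ℕ) : ℤ :=
  ∑ σ : Equiv.Perm (Fin n), chi n lam σ * chi n mu σ * chi n nu σ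

/-! ### Power series in `s` and `t` over `U/I_kronknuth` -/

/-- The quotient `U/I_kronknuth`. -/
abbrev QKK (N : ℕ) := RingQuot (kkRel N)

/-- The image of a generator in `U/I_kronknuth`. -/
def uQ (x : Letter N) : QKK N := RingQuot.mkRingHom (kkRel N) (wrd [x])

/-- A power series in `s` (variable `0`) only. -/
def serS (c : ℕ → QKK N) : MvPowerSeries (Fin 2) (QKK N) :=
  fun m => if m 1 = 0 then c (m 0) else 0

/-- A power series in `t` (variable `1`) only. -/
def serT (c : ℕ → QKK N) : MvPowerSeries (Fin 2) (QKK N) :=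
  fun m => if m 0 = 0 then c (m 1) else 0

/-- A constant power series. -/
def constSer (a : QKK N) : MvPowerSeries (Fin 2) (QKK N) :=
  fun m => if m = 0 then a else 0

/-- `f_x = 1 + u_x s` (`x` unbarred), `(1 - u_x s)⁻¹ = Σ_k u_x^k s^k` (`x` barred). -/
def fSer (x : Letter N) : MvPowerSeries (Fin 2) (QKK N) :=
  serS (fun k => if x.2 then uQ x ^ k else if k = 0 then 1 else if k = 1 then uQ x else 0)

/-- The inverse of `f_x`. -/
def fSerInv (x : Letter N) : MvPowerSeries (Fin 2) (QKK N) :=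
  serS (fun k => if x.2 then (if k = 0 then 1 else if k = 1 then -uQ x else 0)
    else (-uQ x) ^ k)

/-- `g_z = 1 + u_z t` (`z` unbarred), `(1 - u_z t)⁻¹` (`z` barred). -/
def gSer (z : Letter N) : MvPowerSeries (Fin 2) (QKK N) :=
  serT (fun k => if z.2 then uQ z ^ k else if k = 0 then 1 else if k = 1 then uQ z else 0)

/-- The inverse of `g_z`. -/
def gSerInv (z : Letter N) : MvPowerSeries (Fin 2) (QKK N) :=
  serT (fun k => if z.2 then (if k = 0 then 1 else if k = 1 then -uQ z else 0)
    else (-uQ z) ^ k)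

end NCS
/-
Expanding `e_i(u) h_{n-i}(u)` over words, a word `w` of length `n ≥ 1` occurs once for every
position `i` at which it splits into a `≥'`-chain followed by a `≤''`-chain. Any two letters
satisfy exactly one of `≥'` and `≤''`, so moving the split point by one step is a sign-reversing
involution on these splits, and `Σ_i (-1)^i e_i(u) h_{n-i}(u) = 0`. Solving this recursively,
in any quotient of `U` every `h_n(u)` lies in the subring generated by the `e_k(u)` and
conversely; elements of a subring generated by pairwise commuting elements commute.
-/

theorem Finset.sum_neg_one_pow_eq_zero_of_xor {R : Type*} [Ring R] {s : Finset ℕ}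
    (hs : ∀ i ∈ s, Xor (i + 1 ∈ s) (i ≠ 0 ∧ i - 1 ∈ s)) :
    ∑ i ∈ s, (-1 : R) ^ i = 0 := by
  have hdown : ∀ i ∈ s, i + 1 ∉ s → i ≠ 0 ∧ i - 1 ∈ s :=
    fun i hi hup => (hs i hi).or.resolve_left hup
  refine Finset.sum_involution (fun i _ => if i + 1 ∈ s then i + 1 else i - 1)
    (fun i hi => ?_) (fun i hi _ => ?_) (fun i hi => ?_) (fun i hi => ?_)
  · split_ifs with hup
    · rw [pow_succ, mul_neg_one, add_neg_cancel]
    · obtain ⟨k, rfl⟩ := Nat.exists_eq_succ_of_ne_zero (hdown i hi hup).1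
      rw [Nat.succ_sub_one, pow_succ, mul_neg_one, neg_add_cancel]
  · split_ifs with hup
    · omega
    · have := (hdown i hi hup).1
      omega
  · split_ifs with hup
    · exact hup
    · exact (hdown i hi hup).2
  · by_cases hup : i + 1 ∈ s
    · have : i + 1 + 1 ∉ s := fun h => ((hs _ hup).resolve_left (by simp_all)).2 h
      simp [hup, this]
    · obtain ⟨hi0, -⟩ := hdown i hi hup
      simp [hup, Nat.sub_add_cancel (Nat.one_le_iff_ne_zero.mpr hi0), hi]

namespace List

variable {α : Type*} {r r' : α → α → Prop}

theorem isChain_ofFn_iff_forall_adjacent {k : ℕ} (f : Fin k → α) :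
    (ofFn f).IsChain r ↔ ∀ i j : Fin k, (j : ℕ) = i + 1 → r (f i) (f j) := by
  rw [isChain_ofFn]
  refine ⟨fun h i j hij => ?_, fun h i hi => h _ _ rfl⟩
  rw [show j = ⟨i + 1, hij ▸ j.2⟩ from Fin.ext hij]
  exact h i _

theorem isChain_take_iff {l : List α} {i : ℕ} :
    (l.take i).IsChain r ↔ ∀ j (h : j + 1 < l.length), j + 1 < i → r l[j] l[j + 1] := by
  simp only [isChain_iff_getElem, length_take, getElem_take]
  exact ⟨fun h j _ _ => h j (by omega), fun h j _ => h j (by omega) (by omega)⟩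

theorem isChain_drop_iff {l : List α} {i : ℕ} :
    (l.drop i).IsChain r ↔ ∀ j (h : j + 1 < l.length), i ≤ j → r l[j] l[j + 1] := by
  simp only [isChain_iff_getElem, length_drop, getElem_drop]
  refine ⟨fun h j _ hij => ?_, fun h j _ => ?_⟩
  · obtain ⟨k, rfl⟩ := Nat.exists_eq_add_of_le hij
    simpa [Nat.add_assoc] using h k (by omega)
  · simpa [Nat.add_assoc] using h (i + j) (by omega) (by omega)

theorem sum_neg_one_pow_chain_splits_eq_zero {R : Type*} [Ring R]
    (hr : ∀ a b, r' a b ↔ ¬ r a b) {l : List α} (hl : l ≠ []) :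
    ∑ i ∈ (Finset.range (l.length + 1)).filter
        (fun i => (l.take i).IsChain r ∧ (l.drop i).IsChain r'), (-1 : R) ^ i = 0 := by
  have hlen : 0 < l.length := length_pos_iff.mpr hl
  apply Finset.sum_neg_one_pow_eq_zero_of_xor
  intro i hi
  simp only [Finset.mem_filter, Finset.mem_range, isChain_take_iff, isChain_drop_iff] at hi ⊢
  obtain ⟨hin, hpre, hsuf⟩ := hi
  rcases i with _ | k
  · exact Or.inl ⟨⟨by omega, fun j _ hj => absurd hj (by omega),
      fun j h _ => hsuf j h (by omega)⟩, fun h => h.1 rfl⟩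
  simp only [ne_eq, Nat.add_one_ne_zero, not_false_eq_true, true_and, Nat.add_sub_cancel]
  by_cases hk : ∃ h : k + 1 < l.length, r l[k] l[k + 1]
  · obtain ⟨hk1, hkr⟩ := hk
    refine Or.inl ⟨⟨by omega, fun j h hj => ?_, fun j h _ => hsuf j h (by omega)⟩,
      fun ⟨_, _, hsuf'⟩ => (hr _ _).mp (hsuf' k hk1 le_rfl) hkr⟩
    rcases Nat.lt_or_ge (j + 1) (k + 1) with hj | hj
    · exact hpre j h hj
    · obtain rfl : j = k := by omega
      exact hkr
  · refine Or.inr ⟨⟨by omega, fun j h hj => hpre j h (by omega), fun j h hj => ?_⟩,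
      fun ⟨_, hpre', _⟩ => hk ⟨by omega, hpre' k (by omega) (by omega)⟩⟩
    rcases Nat.lt_or_ge k j with hj | hj
    · exact hsuf j h hj
    · obtain rfl : j = k := by omega
      exact (hr _ _).mpr fun hkr => hk ⟨h, hkr⟩

end List

section NewtonPair

variable {Q Q' : Type*} [Ring Q] [Ring Q']

/-- The power series `Σ (-1)^i E_i t^i` and `Σ H_j t^j` are mutually inverse, both with constant
term `1`; the pair `(e_k, h_k)` of symmetric functions is the model case. -/
def IsNewtonPair (E H : ℕ → Q) : Prop :=
  E 0 = 1 ∧ H 0 = 1 ∧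
    ∀ n ≠ 0, ∑ i ∈ Finset.range (n + 1), (-1 : ℤ) ^ i • (E i * H (n - i)) = 0

variable {E H : ℕ → Q}

theorem IsNewtonPair.map (h : IsNewtonPair E H) (φ : Q →+* Q') :
    IsNewtonPair (fun n => φ (E n)) (fun n => φ (H n)) := by
  obtain ⟨hE, hH, hsum⟩ := h
  refine ⟨by simp only [hE, map_one], by simp only [hH, map_one], fun n hn => ?_⟩
  simpa only [map_sum, map_zsmul, map_mul, map_zero] using congrArg φ (hsum n hn)

theorem IsNewtonPair.right_mem_closure (h : IsNewtonPair E H) (n : ℕ) :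
    H n ∈ Subring.closure (Set.range E) := by
  obtain ⟨hE, hH, hsum⟩ := h
  induction n using Nat.strong_induction_on with
  | _ n ih =>
    rcases eq_or_ne n 0 with rfl | hn
    · exact hH ▸ one_mem _
    have hrec := hsum n hn
    rw [Finset.sum_range_succ', pow_zero, one_smul, hE, one_mul, Nat.sub_zero, add_comm,
      ← eq_neg_iff_add_eq_zero] at hrec
    rw [hrec]
    refine neg_mem (sum_mem fun i _ => zsmul_mem (mul_mem ?_ (ih _ (by omega))) _)
    exact Subring.subset_closure ⟨i + 1, rfl⟩

theorem IsNewtonPair.left_mem_closure (h : IsNewtonPair E H) (n : ℕ) :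
    E n ∈ Subring.closure (Set.range H) := by
  obtain ⟨hE, hH, hsum⟩ := h
  induction n using Nat.strong_induction_on with
  | _ n ih =>
    rcases eq_or_ne n 0 with rfl | hn
    · exact hE ▸ one_mem _
    have hrec := hsum n hn
    rw [Finset.sum_range_succ, Nat.sub_self, hH, mul_one, add_comm,
      ← eq_neg_iff_add_eq_zero] at hrec
    have hEn : E n = (-1 : ℤ) ^ n • ((-1 : ℤ) ^ n • E n) := by
      rw [smul_smul, ← pow_add, Even.neg_one_pow ⟨n, rfl⟩, one_smul]
    rw [hEn, hrec]
    refine zsmul_mem (neg_mem (sum_mem fun i hi => zsmul_mem (mul_mem ?_ ?_) _)) _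
    · exact ih i (Finset.mem_range.mp hi)
    · exact Subring.subset_closure ⟨n - i, rfl⟩

theorem forall_commute_of_mem_closure_range
    (hHE : ∀ n, H n ∈ Subring.closure (Set.range E)) (hE : ∀ k l, Commute (E k) (E l))
    (k l : ℕ) : Commute (H k) (H l) := by
  have hcl := Subring.closure_le_centralizer_centralizer (Set.range E)
  refine Set.centralizer_centralizer_comm_of_comm ?_ _ (hcl (hHE k)) _ (hcl (hHE l))
  rintro _ ⟨i, rfl⟩ _ ⟨j, rfl⟩
  exact hE i j

theorem IsNewtonPair.forall_commute_iff (h : IsNewtonPair E H) :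
    (∀ k l, Commute (E k) (E l)) ↔ ∀ k l, Commute (H k) (H l) :=
  ⟨forall_commute_of_mem_closure_range h.right_mem_closure,
    forall_commute_of_mem_closure_range h.left_mem_closure⟩

end NewtonPair

namespace NCS

section

variable {N : ℕ} {key : Letter N → ℕ}

theorem rowLE_iff_not_colGE (hkey : Function.Injective key) (a b : Letter N) :
    rowLE key a b ↔ ¬ colGE key a b := by
  unfold rowLE colGE
  by_cases hab : a = b
  · subst hab
    cases a.2 <;> simp
  · have := hkey.ne hab
    simp only [hab, false_and, or_false]
    omega

theorem wrd_append (u v : List (Letter N)) : wrd (u ++ v) = wrd u * wrd v := by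
  rw [wrd, wrd, wrd, MonoidAlgebra.single_mul_single, one_mul, FreeMonoid.ofList_append]

theorem eU_eq_sum_isChain (k : ℕ) :
    eU key k = ∑ f ∈ Finset.univ.filter (fun f : Fin k → Letter N =>
      (List.ofFn f).IsChain (colGE key)), wrd (List.ofFn f) := by
  refine Finset.sum_congr ?_ fun _ _ => rfl
  ext f
  simp [List.isChain_ofFn_iff_forall_adjacent]

theorem hU_eq_sum_isChain (k : ℕ) :
    hU key k = ∑ f ∈ Finset.univ.filter (fun f : Fin k → Letter N =>
      (List.ofFn f).IsChain (rowLE key)), wrd (List.ofFn f) :=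
  Finset.sum_congr (Finset.filter_congr fun f _ => (List.isChain_ofFn_iff_forall_adjacent f).symm)
    fun _ _ => rfl

theorem eU_mul_hU {i j n : ℕ} (h : i + j = n) :
    eU key i * hU key j = ∑ w ∈ Finset.univ.filter (fun w : Fin n → Letter N =>
      ((List.ofFn w).take i).IsChain (colGE key) ∧ ((List.ofFn w).drop i).IsChain (rowLE key)),
      wrd (List.ofFn w) := by
  subst h
  rw [eU_eq_sum_isChain, hU_eq_sum_isChain, Finset.sum_mul_sum, ← Finset.sum_product']
  refine Finset.sum_equiv (Fin.appendEquiv i j) (fun fg => ?_) fun fg _ => ?_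
  · simp [Fin.appendEquiv, List.take_left', List.drop_left']
  · simp [Fin.appendEquiv, wrd_append]

theorem sum_range_neg_one_pow_smul_eU_mul_hU (hkey : Function.Injective key) {n : ℕ}
    (hn : n ≠ 0) :
    ∑ i ∈ Finset.range (n + 1), (-1 : ℤ) ^ i • (eU key i * hU key (n - i)) = 0 := by
  calc ∑ i ∈ Finset.range (n + 1), (-1 : ℤ) ^ i • (eU key i * hU key (n - i))
      = ∑ i ∈ Finset.range (n + 1), ∑ w : Fin n → Letter N,
          if ((List.ofFn w).take i).IsChain (colGE key) ∧
            ((List.ofFn w).drop i).IsChain (rowLE key)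
          then (-1 : ℤ) ^ i • wrd (List.ofFn w) else 0 := by
        refine Finset.sum_congr rfl fun i hi => ?_
        rw [eU_mul_hU (Nat.add_sub_of_le (Finset.mem_range_succ_iff.mp hi)),
          Finset.smul_sum, Finset.sum_filter]
    _ = ∑ w : Fin n → Letter N, (∑ i ∈ (Finset.range (n + 1)).filter (fun i =>
          ((List.ofFn w).take i).IsChain (colGE key) ∧
            ((List.ofFn w).drop i).IsChain (rowLE key)), (-1 : ℤ) ^ i) • wrd (List.ofFn w) := by
        rw [Finset.sum_comm]
        simp only [Finset.sum_smul, Finset.sum_filter, ite_smul, zero_smul]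
    _ = 0 := Finset.sum_eq_zero fun w _ => by
        have hsplits := List.sum_neg_one_pow_chain_splits_eq_zero (R := ℤ)
          (rowLE_iff_not_colGE hkey) (l := List.ofFn w) (by simpa using hn)
        rw [List.length_ofFn] at hsplits
        rw [hsplits, zero_smul]

theorem isNewtonPair_eU_hU (hkey : Function.Injective key) :
    IsNewtonPair (eU key) (hU key) :=
  ⟨by simp [eU_eq_sum_isChain, wrd, MonoidAlgebra.one_def],
    by simp [hU_eq_sum_isChain, wrd, MonoidAlgebra.one_def],
    fun _ hn => sum_range_neg_one_pow_smul_eU_mul_hU hkey hn⟩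

end

/-- For a two-sided ideal `I` of `U`, the `e_k(u)` pairwise
commute mod `I` iff the `h_k(u)` pairwise commute mod `I`. -/
theorem elementary_commute_iff_homogeneous_commute (N : ℕ) (key : Letter N → ℕ)
    (hkey : IsShuffleKey key) (I : TwoSidedIdeal (FA N)) :
    (∀ k l : ℕ, eU key k * eU key l - eU key l * eU key k ∈ I) ↔
      (∀ k l : ℕ, hU key k * hU key l - hU key l * hU key k ∈ I) := by
  rw [← I.ker_ringCon_mk']
  simp only [TwoSidedIdeal.mem_ker, map_sub, map_mul, sub_eq_zero]
  exact ((isNewtonPair_eU_hU hkey.1).map I.ringCon.mk').forall_commute_iff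

end NCS
end
end

section
/- Let y, z, x_1, ..., x_t ∈ A satisfy y ≥' x_1 ≥' x_2 ≥' ... ≥' x_t (where ≥' means strictly greater in the natural order, or equal barred letters) and y ≤ z. Suppose it is not the case that y = z↓, and it is not the case that y = z with both barred. Then the congruence y x_1 x_2 ··· x_t z ≡ y z x_1 x_2 ··· x_t holds modulo the ideal I_Kron. -/
open scoped BigOperators
open Classical

noncomputable section

namespace NCS

/-!
Move `z` leftwards through `x_1 ⋯ x_t` one letter at a time. Except in one configuration, the
three-letter step `y x_1 z ≡ y z x_1` is a single defining relation of `I_Kron` (`x_1 z = z x_1`,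
`y x_1 y = y y x_1` or `y y z = y z y`). The exception is `z = y` unbarred and `x_1 = b := y↓`:
then the word reads `y b^m w y` with `w` either far below `y` or `c w'` with `c = b↓` and `w'` far
below `y`, and `y b^m y ≡ y y b^m`, `y b^m c y ≡ y y b^m c` follow by induction on `m` from the
relations `yyb = yby`, `bby = byb`, `yyc = ycy` and the rotation `(cy - yc) b = b (cy - yc)`.
-/

variable {N : ℕ}

section RingIdentities

variable {R : Type*} [Ring R] {y b c : R}

theorem mul_pow_mul_eq_mul_mul_pow (hyyb : y * y * b = y * b * y)
    (hbby : b * b * y = b * y * b) (m : ℕ) : y * b ^ m * y = y * y * b ^ m := by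
  rcases m with _ | m
  · simp
  induction m with
  | zero => simpa using hyyb.symm
  | succ m ih =>
    calc y * b ^ (m + 1 + 1) * y = y * b ^ m * (b * b * y) := by simp only [pow_succ, mul_assoc]
      _ = y * b ^ (m + 1) * y * b := by rw [hbby]; simp only [pow_succ, mul_assoc]
      _ = y * y * b ^ (m + 1 + 1) := by rw [ih]; simp only [pow_succ, mul_assoc]

theorem mul_pow_mul_mul_eq_mul_mul_pow_mul (hyyb : y * y * b = y * b * y)
    (hbby : b * b * y = b * y * b) (hyyc : y * y * c = y * c * y)
    (hrot : (c * y - y * c) * b = b * (c * y - y * c)) (m : ℕ) :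
    y * b ^ m * c * y = y * y * b ^ m * c := by
  have hbcy : b * c * y = c * y * b - y * c * b + b * y * c :=
    calc b * c * y = b * (c * y - y * c) + b * y * c := by noncomm_ring
      _ = c * y * b - y * c * b + b * y * c := by rw [← hrot]; noncomm_ring
  induction m with
  | zero => simpa using hyyc.symm
  | succ m ih =>
    calc y * b ^ (m + 1) * c * y = y * b ^ m * (b * c * y) := by simp only [pow_succ, mul_assoc]
      _ = y * b ^ m * c * y * b - y * b ^ m * y * c * b + y * b ^ (m + 1) * y * c := by
        rw [hbcy]; simp only [mul_add, mul_sub, pow_succ, mul_assoc]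
      _ = y * y * b ^ (m + 1) * c := by
        rw [ih, mul_pow_mul_eq_mul_mul_pow hyyb hbby, mul_pow_mul_eq_mul_mul_pow hyyb hbby,
          sub_self, zero_add]

end RingIdentities

theorem natKey_injective : Function.Injective (natKey : Letter N → ℕ) := by
  rintro ⟨⟨a, ha⟩, p⟩ ⟨⟨b, hb⟩, q⟩ h
  simp only [natKey] at h
  cases p <;> cases q <;> simp_all <;> omega

theorem bar_eq_not_of_natKey_succ {x y : Letter N} (h : natKey x + 1 = natKey y) :
    x.2 = !y.2 := by
  simp only [natKey] at h
  cases hx : x.2 <;> cases hy : y.2 <;> simp only [hx, hy] at h <;> first | rfl | omega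

theorem natKey_le_of_colGE {x y : Letter N} (h : colGE natKey y x) : natKey x ≤ natKey y := by
  rcases h with h | ⟨rfl, -⟩ <;> omega

theorem natKey_lt_of_colGE {x y : Letter N} (h : colGE natKey y x) (hy : y.2 = false) :
    natKey x < natKey y := by
  rcases h with h | ⟨-, h⟩
  · exact h
  · simp [hy] at h

instance : Trans (colGE (natKey (N := N))) (colGE natKey) (colGE natKey) where
  trans := by
    rintro x y z (hxy | ⟨rfl, hx⟩) (hyz | ⟨rfl, -⟩)
    · exact .inl (hyz.trans hxy)
    · exact .inl hxy
    · exact .inl hyz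
    · exact .inr ⟨rfl, hx⟩

theorem forall_colGE_of_isChain {y : Letter N} {l : List (Letter N)}
    (h : List.IsChain (colGE natKey) (y :: l)) : ∀ x ∈ l, colGE natKey y x :=
  (List.pairwise_cons.1 h.pairwise).1

/-- The generator `u_x` of `U / I_Kron`. -/
def gen (x : Letter N) : RingQuot (kronRel N) := RingQuot.mkRingHom (kronRel N) (wrd [x])

theorem wrd_cons (x : Letter N) (l : List (Letter N)) : wrd (x :: l) = wrd [x] * wrd l := by
  simp [wrd, MonoidAlgebra.single_mul_single]

theorem mkRingHom_wrd (l : List (Letter N)) :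
    RingQuot.mkRingHom (kronRel N) (wrd l) = (l.map gen).prod := by
  induction l with
  | nil => simp [wrd, ← MonoidAlgebra.one_def]
  | cons x l ih => rw [wrd_cons, map_mul, ih]; rfl

theorem prod_map_gen_eq_of_kronRel {l l' : List (Letter N)} (h : kronRel N (wrd l) (wrd l')) :
    (l.map gen).prod = (l'.map gen).prod := by
  simpa only [mkRingHom_wrd] using RingQuot.mkRingHom_rel h

theorem commute_gen_of_far {x z : Letter N} (h : natKey x + 2 < natKey z) :
    Commute (gen x) (gen z) := by
  simpa [Commute, SemiconjBy] using prod_map_gen_eq_of_kronRel (kronRel.far x z h)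

theorem gen_rel_unbarred {x y : Letter N} (hy : y.2 = false) (h : natKey x < natKey y) :
    gen y * gen y * gen x = gen y * gen x * gen y := by
  simpa [mul_assoc] using prod_map_gen_eq_of_kronRel (kronRel.rel3 x y hy h)

theorem gen_rel_barred {y z : Letter N} (hy : y.2 = true) (h : natKey y < natKey z) :
    gen y * gen y * gen z = gen y * gen z * gen y := by
  simpa [mul_assoc] using prod_map_gen_eq_of_kronRel (kronRel.rel4 y z hy h)

theorem gen_rel_rot {x y z : Letter N} (h1 : natKey x + 1 = natKey y)
    (h2 : natKey y + 1 = natKey z) :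
    (gen x * gen z - gen z * gen x) * gen y = gen y * (gen x * gen z - gen z * gen x) := by
  have h := RingQuot.mkRingHom_rel (kronRel.rot x y z h1 h2)
  simp only [map_sub, mkRingHom_wrd, List.map_cons, List.map_nil, List.prod_cons,
    List.prod_nil, mul_one] at h
  simpa only [sub_mul, mul_sub, mul_assoc] using h

theorem commute_gen_prod_of_far {y : Letter N} {l : List (Letter N)}
    (h : ∀ x ∈ l, natKey x + 2 < natKey y) : Commute (gen y) (l.map gen).prod :=
  Commute.list_prod_right _ _ fun _ hmem => by
    obtain ⟨x, hx, rfl⟩ := List.mem_map.1 hmem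
    exact (commute_gen_of_far (h x hx)).symm

theorem gen_mul_gen_mul_gen_comm {y x z : Letter N} (hyx : colGE natKey y x)
    (hyz : natKey y ≤ natKey z) (h1 : ¬ natKey y + 1 = natKey z)
    (h2 : ¬ (y = z ∧ y.2 = true)) : gen y * gen x * gen z = gen y * gen z * gen x := by
  have hxy := natKey_le_of_colGE hyx
  by_cases hfar : natKey x + 2 < natKey z
  · rw [mul_assoc, (commute_gen_of_far hfar).eq, mul_assoc]
  obtain rfl | hz : z = y ∨ natKey z = natKey y + 2 := by
    rcases (by omega : natKey z = natKey y ∨ natKey z = natKey y + 2) with h | h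
    · exact .inl (natKey_injective h)
    · exact .inr h
  · have hz : z.2 = false := Bool.eq_false_iff.2 fun hz => h2 ⟨rfl, hz⟩
    exact (gen_rel_unbarred hz (natKey_lt_of_colGE hyx hz)).symm
  · obtain rfl : x = y := natKey_injective (by omega)
    have hx : x.2 = true := by
      rcases hyx with h | ⟨-, h⟩
      · omega
      · exact h
    exact gen_rel_barred hx (by omega)

theorem gen_mul_pow_mul_prod_mul_gen {y b : Letter N} (hy : y.2 = false)
    (hby : natKey b + 1 = natKey y) (l : List (Letter N)) (m : ℕ)
    (hchain : List.IsChain (colGE natKey) (b :: l)) :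
    gen y * (gen b ^ m * (l.map gen).prod) * gen y =
      gen y * gen y * (gen b ^ m * (l.map gen).prod) := by
  have hb : b.2 = true := by simpa [hy] using bar_eq_not_of_natKey_succ hby
  have hyyb := gen_rel_unbarred hy (by omega : natKey b < natKey y)
  have hbby := gen_rel_barred hb (by omega : natKey b < natKey y)
  induction l generalizing m with
  | nil => simpa using mul_pow_mul_eq_mul_mul_pow hyyb hbby m
  | cons d l ih =>
    rw [List.isChain_cons_cons] at hchain
    obtain ⟨hbd, hchain⟩ := hchain
    by_cases hdb : d = b
    · subst hdb
      simpa [pow_succ, mul_assoc] using ih (m + 1) hchain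
    have hdb_lt : natKey d < natKey b :=
      lt_of_le_of_ne (natKey_le_of_colGE hbd) (natKey_injective.ne hdb)
    by_cases hdb_succ : natKey d + 1 = natKey b
    · have hd : d.2 = false := by simpa [hb] using bar_eq_not_of_natKey_succ hdb_succ
      have hyyd := gen_rel_unbarred hy (by omega : natKey d < natKey y)
      have hfar : Commute (gen y) (l.map gen).prod := commute_gen_prod_of_far fun r hr => by
        have := natKey_lt_of_colGE (forall_colGE_of_isChain hchain r hr) hd
        omega
      calc gen y * (gen b ^ m * (List.map gen (d :: l)).prod) * gen y
          = (gen y * gen b ^ m * gen d * gen y) * (l.map gen).prod := by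
            simp only [List.map_cons, List.prod_cons, mul_assoc, ← hfar.eq]
        _ = (gen y * gen y * gen b ^ m * gen d) * (l.map gen).prod := by
            rw [mul_pow_mul_mul_eq_mul_mul_pow_mul hyyb hbby hyyd (gen_rel_rot hdb_succ hby)]
        _ = _ := by simp only [List.map_cons, List.prod_cons, mul_assoc]
    · have hfar : Commute (gen y) ((d :: l).map gen).prod := commute_gen_prod_of_far fun r hr => by
        rcases List.mem_cons.1 hr with rfl | hr
        · omega
        · have := natKey_le_of_colGE (forall_colGE_of_isChain hchain r hr)
          omega
      calc gen y * (gen b ^ m * (List.map gen (d :: l)).prod) * gen y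
          = (gen y * gen b ^ m * gen y) * ((d :: l).map gen).prod := by
            simp only [mul_assoc, ← hfar.eq]
        _ = _ := by rw [mul_pow_mul_eq_mul_mul_pow hyyb hbby]; simp only [mul_assoc]

theorem gen_mul_prod_mul_gen_comm {y z : Letter N} {xs : List (Letter N)}
    (hchain : List.IsChain (colGE natKey) (y :: xs)) (hyz : natKey y ≤ natKey z)
    (h1 : ¬ natKey y + 1 = natKey z) (h2 : ¬ (y = z ∧ y.2 = true)) :
    gen y * (xs.map gen).prod * gen z = gen y * gen z * (xs.map gen).prod := by
  induction xs generalizing y with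
  | nil => simp
  | cons x xs ih =>
    rw [List.isChain_cons_cons] at hchain
    obtain ⟨hyx, hchain⟩ := hchain
    have hxy := natKey_le_of_colGE hyx
    by_cases hhard : z = y ∧ natKey x + 1 = natKey y
    · obtain ⟨rfl, hxz⟩ := hhard
      have hz : z.2 = false := Bool.eq_false_iff.2 fun hz => h2 ⟨rfl, hz⟩
      simpa [mul_assoc] using gen_mul_pow_mul_prod_mul_gen hz hxz xs 1 hchain
    have hx1 : ¬ natKey x + 1 = natKey z := fun h =>
      hhard ⟨natKey_injective (by omega), by omega⟩
    have hx2 : ¬ (x = z ∧ x.2 = true) := by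
      rintro ⟨rfl, hx⟩
      obtain rfl : y = x := natKey_injective (by omega)
      exact h2 ⟨rfl, hx⟩
    calc gen y * ((x :: xs).map gen).prod * gen z
        = gen y * (gen x * (xs.map gen).prod * gen z) := by simp only [List.map_cons,
          List.prod_cons, mul_assoc]
      _ = gen y * gen x * gen z * (xs.map gen).prod := by
        rw [ih hchain (by omega) hx1 hx2]; simp only [mul_assoc]
      _ = gen y * gen z * ((x :: xs).map gen).prod := by
        rw [gen_mul_gen_mul_gen_comm hyx hyz h1 h2]; simp only [List.map_cons,
          List.prod_cons, mul_assoc]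

/-- If `y ≥' x_1 ≥' ⋯ ≥' x_t`, `y ≤ z`, and it is neither the
case that `y = z↓` nor that `y = z` are equal barred letters, then
`y x_1 ⋯ x_t z ≡ y z x_1 ⋯ x_t` modulo `I_Kron`. -/
theorem decreasing_word_commute (N : ℕ) (y z : Letter N) (xs : List (Letter N))
    (hchain : List.Chain' (fun p q => colGE natKey p q) (y :: xs))
    (hyz : natKey y ≤ natKey z)
    (h1 : ¬ natKey y + 1 = natKey z)
    (h2 : ¬ (y = z ∧ y.2 = true)) :
    RingQuot.mkRingHom (kronRel N) (wrd (y :: xs ++ [z])) =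
      RingQuot.mkRingHom (kronRel N) (wrd (y :: z :: xs)) := by
  simpa [mkRingHom_wrd, mul_assoc] using gen_mul_prod_mul_gen_comm hchain hyz h1 h2

end NCS
end
end
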